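/- Let T be a complete first-order theory with monster model 𝔠, φ(x̄;ȳ) a partitioned formula with independence dimension N, Δ = Δ_{N,φ}, (P, ⊴) a partial order, ⟨b̄_i : i ∈ P⟩ a Δ-indiscernible sequence indexed by P, and ā a tuple. Define f : P → {0,1} by f(i) = 1 iff ⊨ φ(ā; b̄_i). Then f is an N-indiscernible coloring of P: (i) every antichain A ⊆ P has at most N elements on which f takes one of the two values, and (ii) no chain i₀ ◁ ... ◁ i_{2N+1} in P has f alternating at every step. -/

import Mathlib

open FirstOrder

variable {L : Language} {M : Type*} [L.Structure M] {α β : Type*}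

/-- An antichain of a partial order. -/
def IsAC {P : Type*} [PartialOrder P] (A : Set P) : Prop := ∀ i ∈ A, ∀ j ∈ A, ¬ i < j

/-- An `N`-indiscernible coloring of an arbitrary partial order: every antichain has a
color occurring only finitely often, at most `N` times, and no chain alternates colors
more than `2N+1` times. -/
def IsIndiscColoring {P : Type*} [PartialOrder P] (N : ℕ) (f : P → ZMod 2) : Prop :=
  (∀ A : Set P, IsAC A → ∃ t : ZMod 2,
    (A ∩ f ⁻¹' {t}).Finite ∧ (A ∩ f ⁻¹' {t}).ncard ≤ N) ∧
  ¬ ∃ g : ℕ → P, (∀ ℓ < 2 * N + 1, g ℓ < g (ℓ + 1)) ∧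
      (∀ ℓ < 2 * N + 1, f (g ℓ) ≠ f (g (ℓ + 1)))

/-- A finite family of `lg(ȳ)`-tuples is `φ`-independent: every Boolean pattern on it is
realized by an instance of `φ`. -/
def PhiIndep (φ : L.Formula (α ⊕ β)) (B : Finset (β → M)) : Prop :=
  ∀ s : (β → M) → Bool, ∃ a : α → M, ∀ b ∈ B,
    (φ.Realize (Sum.elim a b) ↔ s b = true)

/-- `φ` has independence dimension `N`: `N` is maximal admitting a `φ`-independent set of
size `N`. -/
def HasIndepDim (φ : L.Formula (α ⊕ β)) (N : ℕ) : Prop :=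
  (∃ B : Finset (β → M), B.card = N ∧ PhiIndep φ B) ∧
  ∀ B : Finset (β → M), PhiIndep φ B → B.card ≤ N

/-- `⟨b i : i ∈ P⟩` is `Δ_{N,φ}`-indiscernible with respect to the partial order `P`:
tuples of distinct indices with the same quantifier-free order type satisfy the same
formulas `∃x̄ ⋀_{k ≤ N} φ(x̄; z̄_k)^{s(k)}`. -/
def DeltaIndisc (N : ℕ) (φ : L.Formula (α ⊕ β)) {P : Type*} [PartialOrder P]
    (b : P → β → M) : Prop :=
  ∀ i j : Fin (N + 1) → P, Function.Injective i → Function.Injective j →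
    (∀ k l, i k ≤ i l ↔ j k ≤ j l) →
    ∀ s : Fin (N + 1) → Bool,
      ((∃ a : α → M, ∀ k, (φ.Realize (Sum.elim a (b (i k))) ↔ s k = true)) ↔
        (∃ a : α → M, ∀ k, (φ.Realize (Sum.elim a (b (j k))) ↔ s k = true)))

/-!
If `f` misbehaved on an antichain or a chain, then every `0/1` pattern on `N + 1` points would be
realized by `f` on some injective tuple of one fixed order type: on an antichain, take the points
from two color classes with more than `N` elements each; on an alternating chain, take one point
from each block `{2k, 2k+1}`. The tuple `ā` witnesses that pattern for `φ`, and
`Δ_{N,φ}`-indiscernibility moves the witness to one fixed tuple of `N + 1` parameters, which is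
then `φ`-independent, contradicting independence dimension `N`.
-/

open Function

theorem Set.nonempty_fin_embedding_of_not_finite_ncard_le {P : Type*} {S : Set P} {n : ℕ}
    (h : ¬ (S.Finite ∧ S.ncard ≤ n)) : Nonempty (Fin (n + 1) ↪ S) := by
  rw [← Set.encard_le_coe_iff_finite_ncard_le, not_le] at h
  obtain ⟨y, -⟩ := Fin.Embedding.exists_embedding_disjoint_range_of_add_le_ENat_card
    (s := (∅ : Set S)) (n := n + 1)
    (by simpa [ENat.add_one_le_iff (ENat.natCast_ne_top n)] using h)
  exact ⟨y⟩

theorem IsAC.le_iff_eq {P : Type*} [PartialOrder P] {A : Set P} (hA : IsAC A) {x y : P}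
    (hx : x ∈ A) (hy : y ∈ A) : x ≤ y ↔ x = y :=
  ⟨fun hxy => by_contra fun hne => hA x hx y hy (hxy.lt_of_ne hne), le_of_eq⟩

theorem HasIndepDim.card_le_of_forall_exists_realize {φ : L.Formula (α ⊕ β)} {N : ℕ}
    (hdim : HasIndepDim (M := M) φ N) {ι : Type*} [Fintype ι] (c : ι → β → M)
    (hc : ∀ s : ι → Bool, ∃ a : α → M, ∀ k, φ.Realize (Sum.elim a (c k)) ↔ s k = true) :
    Fintype.card ι ≤ N := by
  classical
  have hc_inj : Injective c := by
    intro k l hkl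
    obtain ⟨a, ha⟩ := hc fun m => decide (m = l)
    simpa using (ha k).mp (hkl ▸ (ha l).mpr (by simp))
  have hindep : PhiIndep φ (Finset.univ.image c) := by
    intro s
    obtain ⟨a, ha⟩ := hc (s ∘ c)
    exact ⟨a, by simpa using ha⟩
  simpa [Finset.card_image_of_injective _ hc_inj] using hdim.2 _ hindep

namespace DeltaIndisc

variable {φ : L.Formula (α ⊕ β)} {N : ℕ} {P : Type*} [PartialOrder P] {b : P → β → M}
  {a : α → M} {f : P → ZMod 2}

theorem false_of_forall_coloring_realized (hind : DeltaIndisc N φ b)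
    (hdim : HasIndepDim (M := M) φ N) (hf : ∀ i, f i = 1 ↔ φ.Realize (Sum.elim a (b i)))
    {i : Fin (N + 1) → P} (hi : Injective i)
    (h : ∀ t : Fin (N + 1) → ZMod 2, ∃ d : Fin (N + 1) → P, Injective d ∧
      (∀ k l, d k ≤ d l ↔ i k ≤ i l) ∧ ∀ k, f (d k) = t k) : False := by
  have := hdim.card_le_of_forall_exists_realize (b ∘ i) fun s => by
    obtain ⟨d, hd, horder, hfd⟩ := h fun k => if s k then 1 else 0
    refine (hind d i hd hi horder s).mp ⟨a, fun k => ?_⟩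
    rw [← hf, hfd]
    cases s k <;> decide
  simp at this

theorem exists_color_finite_ncard_le_of_isAC (hind : DeltaIndisc N φ b)
    (hdim : HasIndepDim (M := M) φ N) (hf : ∀ i, f i = 1 ↔ φ.Realize (Sum.elim a (b i)))
    {A : Set P} (hA : IsAC A) :
    ∃ t : ZMod 2, (A ∩ f ⁻¹' {t}).Finite ∧ (A ∩ f ⁻¹' {t}).ncard ≤ N := by
  by_contra hsmall
  have e (t : ZMod 2) : Fin (N + 1) ↪ (A ∩ f ⁻¹' {t} : Set P) :=
    (Set.nonempty_fin_embedding_of_not_finite_ncard_le fun ht => hsmall ⟨t, ht⟩).some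
  have he_mem (t : ZMod 2) (k : Fin (N + 1)) : (e t k : P) ∈ A := (e t k).2.1
  have hfe (t : ZMod 2) (k : Fin (N + 1)) : f (e t k) = t := (e t k).2.2
  have he_inj (t : ZMod 2) : Injective fun k => (e t k : P) :=
    Subtype.val_injective.comp (e t).injective
  refine hind.false_of_forall_coloring_realized hdim hf (he_inj 1) fun t => ?_
  have hd_inj : Injective fun k => (e (t k) k : P) := by
    intro k l (hkl : (e (t k) k : P) = e (t l) l)
    have htkl : t k = t l := by rw [← hfe (t k) k, ← hfe (t l) l]; exact congrArg f hkl
    rw [htkl] at hkl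
    exact he_inj (t l) hkl
  refine ⟨_, hd_inj, fun k l => ?_, fun k => hfe _ _⟩
  rw [hA.le_iff_eq (he_mem _ _) (he_mem _ _), hA.le_iff_eq (he_mem _ _) (he_mem _ _),
    hd_inj.eq_iff, (he_inj 1).eq_iff]

theorem not_exists_alternating_chain (hind : DeltaIndisc N φ b)
    (hdim : HasIndepDim (M := M) φ N) (hf : ∀ i, f i = 1 ↔ φ.Realize (Sum.elim a (b i))) :
    ¬ ∃ g : ℕ → P, (∀ ℓ < 2 * N + 1, g ℓ < g (ℓ + 1)) ∧
      (∀ ℓ < 2 * N + 1, f (g ℓ) ≠ f (g (ℓ + 1))) := by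
  rintro ⟨g, hg_lt, hg_alt⟩
  have hg : StrictMonoOn g (Set.Iic (2 * N + 1)) := strictMonoOn_Iic_of_lt_succ hg_lt
  have hg_comp {n : Fin (N + 1) → ℕ} (hn : StrictMono n) (hle : ∀ k, n k ≤ 2 * N + 1) :
      StrictMono (g ∘ n) := fun k l hkl => hg (hle k) (hle l) (hn hkl)
  have hbinary : ∀ x y t : ZMod 2, x ≠ t → x ≠ y → y = t := by decide
  have hblock (m : ℕ) (hm : m ≤ N) (t : ZMod 2) :
      ∃ n, 2 * m ≤ n ∧ n ≤ 2 * m + 1 ∧ f (g n) = t := by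
    by_cases h : f (g (2 * m)) = t
    · exact ⟨2 * m, le_rfl, by omega, h⟩
    · exact ⟨2 * m + 1, by omega, le_rfl, hbinary _ _ _ h (hg_alt _ (by omega))⟩
  have hi : StrictMono (g ∘ fun k : Fin (N + 1) => 2 * (k : ℕ)) :=
    hg_comp (fun k l hkl => by simpa using hkl) fun k => by omega
  refine hind.false_of_forall_coloring_realized hdim hf hi.injective fun t => ?_
  choose n hn_lo hn_hi hfn using fun k : Fin (N + 1) => hblock k (by omega) (t k)
  have hn : StrictMono n := fun k l (hkl : (k : ℕ) < l) => by
    have := hn_hi k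
    have := hn_lo l
    omega
  have hd := hg_comp hn fun k => by have := hn_hi k; omega
  exact ⟨g ∘ n, hd.injective, fun k l => by rw [hd.le_iff_le, hi.le_iff_le], hfn⟩

end DeltaIndisc

/-- Lemma 3.7: for `φ` of independence dimension `N`, a `Δ_{N,φ}`-indiscernible sequence
indexed by a partial order `P`, and any tuple `ā`, the coloring `f(i) = 1` iff
`⊨ φ(ā; b̄_i)` is an `N`-indiscernible coloring of `P`. -/
theorem stmt_11 (φ : L.Formula (α ⊕ β)) (N : ℕ) (hdim : HasIndepDim (M := M) φ N)
    {P : Type*} [PartialOrder P] (b : P → β → M) (hind : DeltaIndisc N φ b)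
    (a : α → M) (f : P → ZMod 2)
    (hf : ∀ i, f i = 1 ↔ φ.Realize (Sum.elim a (b i))) :
    IsIndiscColoring N f :=
  ⟨fun _ hA => hind.exists_color_finite_ncard_le_of_isAC hdim hf hA,
    hind.not_exists_alternating_chain hdim hf⟩
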